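/- arXiv:1909.10673 — 7 statements merged into one kernel-verified Lean document; each statement's English description precedes it below -/
import Mathlib

section
/- (Elimination of a sink node.) Assume the setting of a local constraint family C over a parent assignment pa on V = Fin n with joint uncertainty set U = ⋂ i, C i. Let j ∈ V be a sink, i.e. j ∉ pa i for all i ∈ V, and suppose C j is always definite. Then for every x : ∀ k, D k: (∃ v : D j, Function.update x j v ∈ U) ↔ (∀ i ≠ j, x ∈ C i). In other words, the projection of U onto the coordinates V \ {j} is exactly the set cut out by the constraints C i for i ≠ j. -/
/-- Elimination of a sink node: for a local constraint family `C` over a parent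
assignment `pa` with joint uncertainty set `U = ⋂ i, C i`, if `j` is a sink
(`j ∉ pa i` for all `i`) and `C j` is always definite, then for every `x`, some
update of `x` at coordinate `j` lies in `U` iff `x` satisfies all constraints
`C i` with `i ≠ j`. -/
theorem sink_elimination {n : ℕ} (pa : Fin n → Finset (Fin n))
    (hpa : ∀ i j, j ∈ pa i → j < i)
    (D : Fin n → Type*) (hD : ∀ i, Nonempty (D i))
    (C : Fin n → Set (∀ j, D j))
    (hloc : ∀ i (x x' : ∀ j, D j),
      (∀ j, (j = i ∨ j ∈ pa i) → x j = x' j) → (x ∈ C i ↔ x' ∈ C i))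
    (j : Fin n) (hsink : ∀ i, j ∉ pa i)
    (hdef : ∀ x : ∀ k, D k, ∃ v : D j, Function.update x j v ∈ C j) :
    ∀ x : ∀ k, D k,
      (∃ v : D j, Function.update x j v ∈ ⋂ i, C i) ↔
        ∀ i, i ≠ j → x ∈ C i := by
  intro x
  constructor
  · rintro ⟨v, hv⟩ i hi
    have h := Set.mem_iInter.1 hv i
    refine (hloc i x (Function.update x j v) ?_).2 h
    intro k hk
    have hkj : k ≠ j := by
      rcases hk with rfl | hk
      · exact hi.symm ∘ Eq.symm ∘ id
      · exact fun h => hsink i (h ▸ hk)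
    simp [Function.update_of_ne hkj]
  · intro h
    obtain ⟨v, hv⟩ := hdef x
    refine ⟨v, Set.mem_iInter.2 fun i => ?_⟩
    by_cases hij : i = j
    · exact hij ▸ hv
    · refine (hloc i (Function.update x j v) x ?_).2 (h i hij)
      intro k hk
      have hkj : k ≠ j := by
        rcases hk with rfl | hk
        · exact hij
        · exact fun h => hsink i (h ▸ hk)
      simp [Function.update_of_ne hkj]
end

section
/- (Marginal over an ancestral set.) Assume the setting of a local constraint family C over a parent assignment pa on V = Fin n with joint uncertainty set U = ⋂ i, C i, and suppose every C i is always definite. Let A ⊆ V be an ancestral set, i.e. for every i ∈ A, pa i ⊆ A. Then for every x : ∀ k, D k: (∃ z ∈ U such that z agrees with x on all coordinates in A) ↔ (∀ i ∈ A, x ∈ C i). In other words, the projection of U onto the coordinates in A is exactly the set cut out by the constraints C i for i ∈ A. -/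
/-- Marginal over an ancestral set: for a local constraint family `C` over a
parent assignment `pa`, with joint uncertainty set `U = ⋂ i, C i` and every
`C i` always definite, and for an ancestral set `A` (closed under taking
parents), a point `x` extends to some `z ∈ U` agreeing with `x` on `A` iff `x`
satisfies all constraints `C i` with `i ∈ A`. -/
theorem ancestral_marginal {n : ℕ} (pa : Fin n → Finset (Fin n))
    (hpa : ∀ i j, j ∈ pa i → j < i)
    (D : Fin n → Type*) (hD : ∀ i, Nonempty (D i))
    (C : Fin n → Set (∀ j, D j))
    (hloc : ∀ i (x x' : ∀ j, D j),
      (∀ j, (j = i ∨ j ∈ pa i) → x j = x' j) → (x ∈ C i ↔ x' ∈ C i))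
    (hdef : ∀ i (x : ∀ k, D k), ∃ v : D i, Function.update x i v ∈ C i)
    (A : Set (Fin n)) (hA : ∀ i ∈ A, ∀ j ∈ pa i, j ∈ A) :
    ∀ x : ∀ k, D k,
      (∃ z ∈ ⋂ i, C i, ∀ i ∈ A, z i = x i) ↔ ∀ i ∈ A, x ∈ C i := by
  intro x
  constructor
  · rintro ⟨z, hz, hagree⟩ i hiA
    exact (hloc i z x (fun j hj => hagree j (by
      rcases hj with rfl | hj
      · exact hiA
      · exact hA i hiA j hj))).mp (Set.mem_iInter.mp hz i)
  · intro h
    have key : ∀ m : ℕ, ∃ y : ∀ k, D k,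
        (∀ i ∈ A, y i = x i) ∧ ∀ j : Fin n, (j : ℕ) < m → y ∈ C j := by
      intro m
      induction m with
      | zero => exact ⟨x, fun _ _ => rfl, fun j hj => absurd hj (Nat.not_lt_zero _)⟩
      | succ m ih =>
        obtain ⟨y, h1, h2⟩ := ih
        by_cases hm : m < n
        · set i : Fin n := ⟨m, hm⟩ with hi
          by_cases hiA : i ∈ A
          · refine ⟨y, h1, fun j hj => ?_⟩
            rcases Nat.lt_succ_iff_lt_or_eq.mp hj with hj | hj
            · exact h2 j hj
            · have hji : j = i := Fin.ext hj
              have hjA : j ∈ A := hji ▸ hiA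
              exact (hloc j y x (fun k hk => h1 k (by
                rcases hk with rfl | hk
                · exact hjA
                · exact hA j hjA k hk))).mpr (h j hjA)
          · obtain ⟨v, hv⟩ := hdef i y
            refine ⟨Function.update y i v, ?_, ?_⟩
            · intro k hk
              rw [Function.update_of_ne (by rintro rfl; exact hiA hk), h1 k hk]
            · intro j hj
              rcases Nat.lt_succ_iff_lt_or_eq.mp hj with hj | hj
              · have hji : j ≠ i := fun e => by
                  rw [e] at hj; exact absurd hj (lt_irrefl _)
                refine (hloc j (Function.update y i v) y (fun k hk => ?_)).mpr (h2 j hj)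
                have hki : k ≠ i := by
                  rcases hk with rfl | hk
                  · exact hji
                  · intro e
                    have h3 := hpa j k hk
                    rw [e] at h3
                    have h4 : m < (j : ℕ) := h3
                    omega
                rw [Function.update_of_ne hki]
              · have hji : j = i := Fin.ext hj
                rw [hji]; exact hv
        · refine ⟨y, h1, fun j hj => h2 j (lt_of_lt_of_le j.isLt (le_of_not_gt hm))⟩
    obtain ⟨y, h1, h2⟩ := key n
    exact ⟨y, Set.mem_iInter.mpr (fun i => h2 i i.isLt), h1⟩
end

section
/- (Bayesian uncertainty networks satisfy the local independence properties.) Assume the setting of a local constraint family C over a parent assignment pa on V = Fin n with joint uncertainty set U = ⋂ i, C i, and suppose every C i is always definite. Then for every i ∈ V, the singleton {i} and the set B_i of non-descendants of i excluding i and pa i (i.e. B_i = V \ ({i} ∪ desc(i) ∪ pa i), where desc(i) is the set of descendants of i under the transitive closure of the child relation) are conditionally independent given pa i with respect to U. -/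
/-- `k` is a descendant of `i`: `k` is reachable from `i` by the transitive
closure of the child relation (`i` is a child of `j` iff `j ∈ pa i`). -/
def Desc {n : ℕ} (pa : Fin n → Finset (Fin n)) (i k : Fin n) : Prop :=
  Relation.TransGen (fun a b => a ∈ pa b) i k

/-- `A` and `B` are conditionally independent given `S` with respect to `U`:
any two points of `U` agreeing on `S` can be merged into a point of `U`
agreeing with the first on `A ∪ S` and with the second on `B`. -/
def CondIndep {n : ℕ} {D : Fin n → Type*} (U : Set (∀ j, D j))
    (A B S : Set (Fin n)) : Prop :=
  ∀ u ∈ U, ∀ w ∈ U, (∀ k ∈ S, u k = w k) →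
    ∃ z ∈ U, (∀ k ∈ A ∪ S, z k = u k) ∧ ∀ k ∈ B, z k = w k

/-- Bayesian uncertainty networks satisfy the local independence properties:
each node `i` is conditionally independent of its non-descendants (excluding
itself and its parents) given its parents. -/
theorem local_independence {n : ℕ} (pa : Fin n → Finset (Fin n))
    (hpa : ∀ i j, j ∈ pa i → j < i)
    (D : Fin n → Type*) (hD : ∀ i, Nonempty (D i))
    (C : Fin n → Set (∀ j, D j))
    (hloc : ∀ i (x x' : ∀ j, D j),
      (∀ j, (j = i ∨ j ∈ pa i) → x j = x' j) → (x ∈ C i ↔ x' ∈ C i))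
    (hdef : ∀ i (x : ∀ k, D k), ∃ v : D i, Function.update x i v ∈ C i)
    (i : Fin n) :
    CondIndep (⋂ k, C k) {i}
      {k | k ≠ i ∧ ¬ Desc pa i k ∧ k ∉ pa i} (↑(pa i)) := by
  classical
  intro u hu w hw hS
  have hu' : ∀ k, u ∈ C k := fun k => Set.mem_iInter.mp hu k
  have hw' : ∀ k, w ∈ C k := fun k => Set.mem_iInter.mp hw k
  have hlt : ∀ k, Desc pa i k → i < k := by
    intro k h
    induction h with
    | single h => exact hpa _ _ h
    | tail _ h ih => exact lt_trans ih (hpa _ _ h)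
  have hndi : ¬ Desc pa i i := fun h => lt_irrefl i (hlt i h)
  set z0 : ∀ j, D j := fun k => if k = i ∨ Desc pa i k then u k else w k with hz0def
  set z : ℕ → ∀ j, D j := fun m => Nat.rec z0
    (fun p zp =>
      if h : ∃ hm : p < n, Desc pa i ⟨p, hm⟩ then
        Function.update zp ⟨p, h.choose⟩ (hdef ⟨p, h.choose⟩ zp).choose
      else zp) m with hzdef
  have hz_succ : ∀ p, z (p+1) =
      if h : ∃ hm : p < n, Desc pa i ⟨p, hm⟩ then
        Function.update (z p) ⟨p, h.choose⟩ (hdef ⟨p, h.choose⟩ (z p)).choose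
      else z p := fun p => rfl
  -- stepping from p to p+1 only changes coordinate p
  have hstab : ∀ p (j : Fin n), j.val ≠ p → z (p+1) j = z p j := by
    intro p j hj
    rw [hz_succ]
    split
    · exact Function.update_of_ne (fun h => hj (by rw [h])) _ _
    · rfl
  have hmono : ∀ m (j : Fin n), j.val < m → ∀ m', m ≤ m' → z m' j = z m j := by
    intro m j hj m' hmm
    induction m' with
    | zero => cases Nat.le_zero.mp hmm; rfl
    | succ p ih =>
      rcases Nat.eq_or_lt_of_le hmm with h | h
      · rw [← h]
      · have hp : m ≤ p := Nat.lt_succ_iff.mp h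
        rw [hstab p j (by omega), ih hp]
  -- non-descendant coordinates are never changed
  have hA : ∀ m (k : Fin n), ¬ Desc pa i k → z m k = z0 k := by
    intro m k hk
    induction m with
    | zero => rfl
    | succ p ih =>
      rw [hz_succ]
      split
      · next h =>
        rw [Function.update_of_ne, ih]
        intro he
        exact hk (by rw [he]; exact h.choose_spec)
      · exact ih
  -- values of z0 on non-descendants
  have hz0i : z0 i = u i := by simp [hz0def]
  have hz0w : ∀ k : Fin n, k ≠ i → ¬ Desc pa i k → z0 k = w k := by
    intro k h1 h2
    simp only [hz0def]
    rw [if_neg]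
    rintro (h | h)
    · exact h1 h
    · exact h2 h
  -- parents of i are not descendants
  have hpai : ∀ j, j ∈ pa i → j ≠ i ∧ ¬ Desc pa i j := by
    intro j hj
    constructor
    · exact ne_of_lt (hpa i j hj)
    · intro h
      exact absurd (hlt j h) (not_lt_of_gt (hpa i j hj))
  have hznu : ∀ j, (j = i ∨ j ∈ pa i) → z n j = u j := by
    intro j hj
    rcases hj with rfl | hj
    · rw [hA n j hndi, hz0i]
    · obtain ⟨h1, h2⟩ := hpai j hj
      rw [hA n j h2, hz0w j h1 h2]
      exact (hS j hj).symm
  have hmem : ∀ k : Fin n, z n ∈ C k := by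
    intro k
    by_cases hk : Desc pa i k
    · -- k was updated at step k.val to satisfy C k
      have hex : ∃ hm : k.val < n, Desc pa i ⟨k.val, hm⟩ := ⟨k.isLt, by simpa using hk⟩
      have hkeq : (⟨k.val, hex.choose⟩ : Fin n) = k := Fin.eta k hex.choose
      have hmem1 : Function.update (z k.val) ⟨k.val, hex.choose⟩
          (hdef ⟨k.val, hex.choose⟩ (z k.val)).choose ∈ C ⟨k.val, hex.choose⟩ :=
        (hdef ⟨k.val, hex.choose⟩ (z k.val)).choose_spec
      have hz1 : z (k.val + 1) = Function.update (z k.val) ⟨k.val, hex.choose⟩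
          (hdef ⟨k.val, hex.choose⟩ (z k.val)).choose := by
        rw [hz_succ, dif_pos hex]
      have hmem2 : z (k.val + 1) ∈ C k := by
        rw [hz1]
        rw [hkeq] at hmem1
        exact hmem1
      have hagree : ∀ j, (j = k ∨ j ∈ pa k) → z n j = z (k.val + 1) j := by
        intro j hj
        have hjlt : j.val < k.val + 1 := by
          rcases hj with rfl | hj
          · omega
          · have := hpa k j hj
            omega
        exact hmono (k.val + 1) j hjlt n k.isLt
      exact (hloc k (z n) (z (k.val + 1)) hagree).mpr hmem2
    · by_cases hki : k = i
      · subst hki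
        have hagree : ∀ j, (j = k ∨ j ∈ pa k) → z n j = u j := hznu
        exact (hloc k (z n) u hagree).mpr (hu' k)
      · have hagree : ∀ j, (j = k ∨ j ∈ pa k) → z n j = w j := by
          intro j hj
          have hjni : j ≠ i ∧ ¬ Desc pa i j := by
            rcases hj with rfl | hj
            · exact ⟨hki, hk⟩
            · constructor
              · rintro rfl
                exact hk (Relation.TransGen.single hj)
              · intro h
                exact hk (Relation.TransGen.tail h hj)
          rw [hA n j hjni.2, hz0w j hjni.1 hjni.2]
        exact (hloc k (z n) w hagree).mpr (hw' k)
  refine ⟨z n, Set.mem_iInter.mpr hmem, ?_, ?_⟩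
  · intro k hk
    rcases hk with hk | hk
    · exact hznu k (Or.inl hk)
    · exact hznu k (Or.inr hk)
  · intro k hk
    obtain ⟨h1, h2, _⟩ := hk
    rw [hA n k h2, hz0w k h1 h2]
end

section
/- (Local independence implies network factorization.) Let pa be a parent assignment on V = Fin n, D : V → Type a family of nonempty types, and U ⊆ (∀ j, D j) a nonempty set. Suppose that for every i ∈ V, the singleton {i} and the set B_i = V \ ({i} ∪ desc(i) ∪ pa i) of non-descendants of i excluding i and pa i (where desc(i) is the set of descendants of i under the transitive closure of the child relation) are conditionally independent given pa i with respect to U. Then there exists a local constraint family C : V → Set (∀ j, D j) (each C i depending only on the coordinates in {i} ∪ pa i) such that every C i is always definite and U = ⋂ i, C i. -/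
/-- Local independence implies network factorization: if a nonempty set `U`
satisfies, for every node `i`, the conditional independence of `{i}` from the
non-descendants of `i` (excluding `i` and its parents) given the parents of
`i`, then `U` is the joint uncertainty set of a local constraint family `C`
over `pa`, with every `C i` always definite. -/
theorem local_indep_implies_factorization {n : ℕ}
    (pa : Fin n → Finset (Fin n)) (hpa : ∀ i j, j ∈ pa i → j < i)
    (D : Fin n → Type*) (hD : ∀ i, Nonempty (D i))
    (U : Set (∀ j, D j)) (hU : U.Nonempty)
    (hli : ∀ i : Fin n,
      CondIndep U {i} {k | k ≠ i ∧ ¬ Desc pa i k ∧ k ∉ pa i} (↑(pa i))) :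
    ∃ C : Fin n → Set (∀ j, D j),
      (∀ i (x x' : ∀ j, D j),
        (∀ j, (j = i ∨ j ∈ pa i) → x j = x' j) → (x ∈ C i ↔ x' ∈ C i)) ∧
      (∀ i (x : ∀ k, D k), ∃ v : D i, Function.update x i v ∈ C i) ∧
      U = ⋂ i, C i := by
  classical
  have hdesc : ∀ i k, Desc pa i k → i < k := by
    intro i k h
    induction h with
    | single h => exact hpa _ _ h
    | tail _ h ih => exact ih.trans (hpa _ _ h)
  set C : Fin n → Set (∀ j, D j) := fun i =>
    {x | (∃ u ∈ U, ∀ j ∈ pa i, u j = x j) →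
         ∃ u ∈ U, u i = x i ∧ ∀ j ∈ pa i, u j = x j} with hC
  have key : ∀ i (x x' : ∀ j, D j), x i = x' i → (∀ j ∈ pa i, x j = x' j) →
      x ∈ C i → x' ∈ C i := by
    intro i x x' hi hp hx
    rintro ⟨u, hu, hm⟩
    obtain ⟨v, hv, hvi, hvp⟩ := hx ⟨u, hu, fun j hj => (hm j hj).trans (hp j hj).symm⟩
    exact ⟨v, hv, hvi.trans hi, fun j hj => (hvp j hj).trans (hp j hj)⟩
  refine ⟨C, ?_, ?_, ?_⟩
  · intro i x x' h
    have hi : x i = x' i := h i (Or.inl rfl)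
    have hp : ∀ j ∈ pa i, x j = x' j := fun j hj => h j (Or.inr hj)
    exact ⟨key i x x' hi hp, key i x' x hi.symm fun j hj => (hp j hj).symm⟩
  · intro i x
    have hii : i ∉ pa i := fun h => lt_irrefl i (hpa i i h)
    by_cases hfe : ∃ u ∈ U, ∀ j ∈ pa i, u j = x j
    · obtain ⟨u, hu, hmatch⟩ := hfe
      refine ⟨u i, fun _ => ⟨u, hu, ?_, ?_⟩⟩
      · simp
      · intro j hj
        rw [Function.update_of_ne (fun h : j = i => hii (h ▸ hj))]
        exact hmatch j hj
    · refine ⟨(hD i).some, fun h => ?_⟩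
      obtain ⟨u, hu, hm⟩ := h
      exact absurd ⟨u, hu, fun j hj => (hm j hj).trans
        (Function.update_of_ne (fun h : j = i => hii (h ▸ hj)) _ _)⟩ hfe
  · apply Set.Subset.antisymm
    · intro u hu
      refine Set.mem_iInter.mpr fun i => ?_
      exact fun _ => ⟨u, hu, rfl, fun _ _ => rfl⟩
    · intro x hx
      have hx' : ∀ i, x ∈ C i := fun i => Set.mem_iInter.mp hx i
      have claim : ∀ m : ℕ, ∃ u ∈ U, ∀ j : Fin n, (j : ℕ) < m → u j = x j := by
        intro m
        induction m with
        | zero => exact ⟨hU.choose, hU.choose_spec, fun j hj => absurd hj (Nat.not_lt_zero _)⟩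
        | succ m ih =>
          obtain ⟨u, hu, hult⟩ := ih
          by_cases hm : m < n
          · set i : Fin n := ⟨m, hm⟩ with hi
            have hpalt : ∀ j ∈ pa i, (j : ℕ) < m := fun j hj => hpa i j hj
            obtain ⟨v, hv, hvi, hvp⟩ := hx' i ⟨u, hu, fun j hj => hult j (hpalt j hj)⟩
            obtain ⟨z, hz, hzA, hzB⟩ := hli i v hv u hu (by
              intro k hk
              have hk' : k ∈ pa i := hk
              exact (hvp k hk').trans (hult k (hpalt k hk')).symm)
            refine ⟨z, hz, fun j hj => ?_⟩
            by_cases hji : j = i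
            · rw [hji]
              exact (hzA i (Or.inl rfl)).trans hvi
            · have hjm : (j : ℕ) < m := by
                rcases Nat.lt_succ_iff_lt_or_eq.mp hj with h | h
                · exact h
                · exact absurd (Fin.ext h) hji
              by_cases hjp : j ∈ pa i
              · exact (hzA j (Or.inr hjp)).trans (hvp j hjp)
              · have hjB : j ∈ {k | k ≠ i ∧ ¬ Desc pa i k ∧ k ∉ pa i} := by
                  refine ⟨hji, fun hd => ?_, hjp⟩
                  exact absurd (hdesc i j hd) (by simp [hi, Fin.lt_def]; omega)
                exact (hzB j hjB).trans (hult j hjm)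
          · exact ⟨u, hu, fun j hj => hult j (lt_of_lt_of_le j.isLt (Nat.not_lt.mp hm))⟩
      obtain ⟨u, hu, hall⟩ := claim n
      have : x = u := funext fun j => (hall j j.isLt).symm
      rw [this]; exact hu
end

section
/- (Global Markov property for Bayesian uncertainty networks.) Assume the setting of a local constraint family C over a parent assignment pa on V = Fin n with joint uncertainty set U = ⋂ i, C i, and suppose every C i is always definite. Let A, B, S be pairwise disjoint subsets of V (not necessarily spanning V). If S d-separates A and B, then A and B are conditionally independent given S with respect to U. -/
/-- `v 0, v 1, …, v m` is a trail: `m ≥ 1`, the vertices `v 0, …, v m` are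
pairwise distinct, and consecutive vertices are joined by an edge in one
direction or the other. -/
def IsTrail {n : ℕ} (pa : Fin n → Finset (Fin n)) (m : ℕ) (v : ℕ → Fin n) : Prop :=
  1 ≤ m ∧ (∀ k l, k ≤ m → l ≤ m → v k = v l → k = l) ∧
    ∀ k < m, v k ∈ pa (v (k + 1)) ∨ v (k + 1) ∈ pa (v k)

/-- The interior vertex at position `k` is a collider on the trail `v`. -/
def IsCollider {n : ℕ} (pa : Fin n → Finset (Fin n)) (v : ℕ → Fin n) (k : ℕ) : Prop :=
  v (k - 1) ∈ pa (v k) ∧ v (k + 1) ∈ pa (v k)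

/-- The trail `v 0, …, v m` is blocked by `S`: it has an interior non-collider
vertex in `S`, or an interior collider vertex such that neither it nor any of
its descendants lies in `S`. -/
def Blocked {n : ℕ} (pa : Fin n → Finset (Fin n)) (S : Set (Fin n)) (m : ℕ)
    (v : ℕ → Fin n) : Prop :=
  ∃ k, 0 < k ∧ k < m ∧
    ((¬ IsCollider pa v k ∧ v k ∈ S) ∨
      (IsCollider pa v k ∧ v k ∉ S ∧ ∀ d, Desc pa (v k) d → d ∉ S))

/-- `S` d-separates `A` and `B`: every trail from a vertex of `A` to a vertex
of `B` is blocked by `S`. -/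
def DSep {n : ℕ} (pa : Fin n → Finset (Fin n)) (A B S : Set (Fin n)) : Prop :=
  ∀ m (v : ℕ → Fin n), IsTrail pa m v → v 0 ∈ A → v m ∈ B → Blocked pa S m v

/-!
Let `T` be the set of ancestors of `A ∪ B ∪ S` and `X` the set of vertices reachable from `A` in
the moral graph of `T` with `S` deleted. Every vertex of `X` is the end of an active walk from `A`
(Bayes ball), and an active walk shortened at a repeated vertex stays active, so d-separation keeps
`X` away from `B`. The parents of a vertex of `T` lie all in `X ∪ S` or all in `T \ X`; hence
copying `u` on `X ∪ S` and `w` on `T \ X`, and choosing the remaining coordinates by definiteness,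
one vertex at a time in topological order, gives the required `z`.
-/

open Relation

section

variable {n : ℕ} {pa : Fin n → Finset (Fin n)} {S : Set (Fin n)}

def ancestors (pa : Fin n → Finset (Fin n)) (W : Set (Fin n)) : Set (Fin n) :=
  {x | ∃ t ∈ W, ReflTransGen (· ∈ pa ·) x t}

lemma subset_ancestors {W : Set (Fin n)} : W ⊆ ancestors pa W :=
  fun x hx => ⟨x, hx, .refl⟩

lemma mem_ancestors_of_reflTransGen {W : Set (Fin n)} {x y : Fin n}
    (hxy : ReflTransGen (· ∈ pa ·) x y) (hy : y ∈ ancestors pa W) : x ∈ ancestors pa W :=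
  let ⟨t, ht, hyt⟩ := hy
  ⟨t, ht, hxy.trans hyt⟩

lemma notMem_pa_of_mem_pa (hpa : ∀ i j, j ∈ pa i → j < i) {a b : Fin n} (h : a ∈ pa b) :
    b ∉ pa a :=
  fun h' => lt_asymm (hpa b a h) (hpa a b h')

section ActiveWalk

def IsActiveTriple (pa : Fin n → Finset (Fin n)) (S : Set (Fin n)) (a x b : Fin n) : Prop :=
  (a ∈ pa x ∧ b ∈ pa x → x ∈ ancestors pa S) ∧ (¬(a ∈ pa x ∧ b ∈ pa x) → x ∉ S)

def IsActiveWalk (pa : Fin n → Finset (Fin n)) (S : Set (Fin n)) (m : ℕ) (v : ℕ → Fin n) :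
    Prop :=
  (∀ k < m, v k ∈ pa (v (k + 1)) ∨ v (k + 1) ∈ pa (v k)) ∧
    ∀ k, 0 < k → k < m → IsActiveTriple pa S (v (k - 1)) (v k) (v (k + 1))

lemma isActiveWalk_zero (v : ℕ → Fin n) : IsActiveWalk pa S 0 v :=
  ⟨fun _ hk => absurd hk (Nat.not_lt_zero _), fun _ _ hk => absurd hk (Nat.not_lt_zero _)⟩

variable {m : ℕ} {v : ℕ → Fin n}

lemma IsActiveWalk.snoc (hv : IsActiveWalk pa S m v) {y : Fin n}
    (hadj : v m ∈ pa y ∨ y ∈ pa (v m))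
    (hy : 0 < m → IsActiveTriple pa S (v (m - 1)) (v m) y) :
    IsActiveWalk pa S (m + 1) (Function.update v (m + 1) y) := by
  have hold : ∀ k ≤ m, Function.update v (m + 1) y k = v k :=
    fun k hk => Function.update_of_ne (by omega) _ _
  refine ⟨fun k hk => ?_, fun k hk0 hkm => ?_⟩
  · rcases Nat.lt_succ_iff_lt_or_eq.1 hk with hk | rfl
    · rw [hold k hk.le, hold (k + 1) hk]
      exact hv.1 k hk
    · rw [hold k le_rfl, Function.update_self]
      exact hadj
  · rcases Nat.lt_succ_iff_lt_or_eq.1 hkm with hkm | rfl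
    · rw [hold (k - 1) (by omega), hold k hkm.le, hold (k + 1) hkm]
      exact hv.2 k hk0 hkm
    · rw [hold (k - 1) (by omega), hold k le_rfl, Function.update_self]
      exact hy hk0

lemma IsActiveWalk.not_blocked (hv : IsActiveWalk pa S m v) : ¬ Blocked pa S m v := by
  rintro ⟨k, hk0, hkm, ⟨hnc, hkS⟩ | ⟨hc, hkS, hdesc⟩⟩
  · exact (hv.2 k hk0 hkm).2 hnc hkS
  · obtain ⟨t, htS, hkt⟩ := (hv.2 k hk0 hkm).1 hc
    rcases reflTransGen_iff_eq_or_transGen.1 hkt with rfl | hkt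
    · exact hkS htS
    · exact hdesc t hkt htS

lemma exists_collider_of_forward_of_backward
    (hadj : ∀ k < m, v k ∈ pa (v (k + 1)) ∨ v (k + 1) ∈ pa (v k)) {i j : ℕ} (hij : i < j)
    (hjm : j ≤ m) (hi : v i ∈ pa (v (i + 1))) (hj : v (j - 1) ∉ pa (v j)) :
    ∃ p, i < p ∧ p < j ∧ IsCollider pa v p ∧ ReflTransGen (· ∈ pa ·) (v i) (v p) := by
  obtain ⟨l, hl⟩ : ∃ l, j = i + 1 + l := ⟨j - i - 1, by omega⟩
  induction l generalizing i with
  | zero =>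
    subst hl
    exact absurd hi hj
  | succ l ih =>
    rcases hadj (i + 1) (by omega) with hfwd | hback
    · obtain ⟨p, hip, hpj, hp, hanc⟩ := ih (by omega) hfwd (by omega)
      exact ⟨p, by omega, hpj, hp, .head hi hanc⟩
    · exact ⟨i + 1, by omega, by omega, ⟨hi, hback⟩, .single hi⟩

lemma IsActiveWalk.isActiveTriple_splice (hv : IsActiveWalk pa S m v) {i j : ℕ} (hi : 0 < i)
    (hij : i < j) (hjm : j < m) (heq : v i = v j) :
    IsActiveTriple pa S (v (i - 1)) (v i) (v (j + 1)) := by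
  have hti := hv.2 i hi (by omega)
  have htj := hv.2 j (by omega) hjm
  rw [← heq] at htj
  constructor
  · rintro ⟨ha, hb⟩
    by_cases hci : v (i + 1) ∈ pa (v i)
    · exact hti.1 ⟨ha, hci⟩
    by_cases hcj : v (j - 1) ∈ pa (v i)
    · exact htj.1 ⟨hcj, hb⟩
    -- The closed subwalk leaves `v i` forwards and returns to it backwards, so it has a collider
    -- below `v i`, and that collider is an ancestor of `S`.
    obtain ⟨p, hip, hpj, hp, hanc⟩ := exists_collider_of_forward_of_backward hv.1 hij hjm.le
      ((hv.1 i (by omega)).resolve_right hci) (heq ▸ hcj)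
    exact mem_ancestors_of_reflTransGen hanc ((hv.2 p (by omega) (by omega)).1 hp)
  · intro hnc hS
    have hci : v (i - 1) ∈ pa (v i) ∧ v (i + 1) ∈ pa (v i) := by_contra fun h => hti.2 h hS
    have hcj : v (j - 1) ∈ pa (v i) ∧ v (j + 1) ∈ pa (v i) := by_contra fun h => htj.2 h hS
    exact hnc ⟨hci.1, hcj.2⟩

lemma IsActiveWalk.splice (hv : IsActiveWalk pa S m v) {i j : ℕ} (hij : i < j) (hjm : j ≤ m)
    (heq : v i = v j) :
    ∃ v', IsActiveWalk pa S (m - (j - i)) v' ∧ v' 0 = v 0 ∧ v' (m - (j - i)) = v m := by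
  set d := j - i
  set v' : ℕ → Fin n := fun k => if k ≤ i then v k else v (k + d)
  have hlo : ∀ k ≤ i, v' k = v k := fun k hk => if_pos hk
  have hhi : ∀ k, i ≤ k → v' k = v (k + d) := by
    intro k hk
    rcases hk.lt_or_eq with hk | hk
    · exact if_neg (by omega)
    · rw [← hk, hlo i le_rfl, heq]
      congr 1
      omega
  refine ⟨v', ⟨fun k hk => ?_, fun k hk0 hkm => ?_⟩, hlo 0 (Nat.zero_le _), ?_⟩
  · rcases lt_or_ge k i with hki | hki
    · rw [hlo k hki.le, hlo (k + 1) hki]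
      exact hv.1 k (by omega)
    · rw [hhi k hki, hhi (k + 1) (by omega), show k + 1 + d = k + d + 1 by omega]
      exact hv.1 (k + d) (by omega)
  · rcases lt_trichotomy k i with hki | rfl | hki
    · rw [hlo (k - 1) (by omega), hlo k hki.le, hlo (k + 1) hki]
      exact hv.2 k hk0 (by omega)
    · rw [hlo (k - 1) (by omega), hlo k le_rfl, hhi (k + 1) (by omega),
        show k + 1 + d = j + 1 by omega]
      exact hv.isActiveTriple_splice hk0 hij (by omega) heq
    · rw [hhi (k - 1) (by omega), hhi k hki.le, hhi (k + 1) (by omega),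
        show k - 1 + d = k + d - 1 by omega, show k + 1 + d = k + d + 1 by omega]
      exact hv.2 (k + d) (by omega) (by omega)
  · rw [hhi _ (by omega)]
    congr 1
    omega

lemma IsActiveWalk.exists_trail (hv : IsActiveWalk pa S m v) (hne : v 0 ≠ v m) :
    ∃ m' v', IsTrail pa m' v' ∧ ¬ Blocked pa S m' v' ∧ v' 0 = v 0 ∧ v' m' = v m := by
  induction m using Nat.strong_induction_on generalizing v with
  | _ m ih =>
    by_cases hinj : ∀ k l, k ≤ m → l ≤ m → v k = v l → k = l
    · refine ⟨m, v, ⟨Nat.one_le_iff_ne_zero.2 ?_, hinj, hv.1⟩, hv.not_blocked, rfl, rfl⟩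
      rintro rfl
      exact hne rfl
    push Not at hinj
    obtain ⟨k, l, hk, hl, heq, hkl⟩ := hinj
    obtain ⟨i, j, hij, hjm, heq⟩ : ∃ i j, i < j ∧ j ≤ m ∧ v i = v j := by
      rcases hkl.lt_or_gt with h | h
      · exact ⟨k, l, h, hl, heq⟩
      · exact ⟨l, k, h, hk, heq.symm⟩
    obtain ⟨v', hv', h0, hm⟩ := hv.splice hij hjm heq
    obtain ⟨m', v'', htrail, hnb, h0', hm'⟩ :=
      ih _ (by omega) hv' (by rwa [h0, hm])
    exact ⟨m', v'', htrail, hnb, h0'.trans h0, hm'.trans hm⟩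

end ActiveWalk

section ActiveReach

variable {A : Set (Fin n)}

/-- Bayes ball: `ActiveReach pa S A y d` says that an active walk from `A` reaches `y` along an edge
pointing into `y` iff `d`. -/
inductive ActiveReach (pa : Fin n → Finset (Fin n)) (S A : Set (Fin n)) : Fin n → Bool → Prop
  | start {a : Fin n} : a ∈ A → ActiveReach pa S A a false
  | toChild {x y : Fin n} {d : Bool} :
      ActiveReach pa S A x d → x ∉ S → x ∈ pa y → ActiveReach pa S A y true
  | toParent {x y : Fin n} :
      ActiveReach pa S A x false → x ∉ S → y ∈ pa x → ActiveReach pa S A y false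
  | bounce {x y : Fin n} :
      ActiveReach pa S A x true → x ∈ ancestors pa S → y ∈ pa x → ActiveReach pa S A y false

lemma ActiveReach.exists_isActiveWalk (hpa : ∀ i j, j ∈ pa i → j < i) {y : Fin n} {d : Bool}
    (h : ActiveReach pa S A y d) :
    ∃ m v, IsActiveWalk pa S m v ∧ v 0 ∈ A ∧ v m = y ∧
      (d = true ↔ 0 < m ∧ v (m - 1) ∈ pa y) := by
  induction h with
  | @start a ha => exact ⟨0, fun _ => a, isActiveWalk_zero _, ha, rfl, by simp⟩
  | @toChild x y d _ hxS hxy ih =>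
    obtain ⟨m, v, hv, h0, rfl, -⟩ := ih
    refine ⟨m + 1, _, hv.snoc (.inl hxy) fun _ => ⟨fun h => ?_, fun _ => hxS⟩, ?_, by simp, ?_⟩
    · exact absurd h.2 (notMem_pa_of_mem_pa hpa hxy)
    · rwa [Function.update_of_ne (by omega)]
    · simp [hxy]
  | @toParent x y _ hxS hyx ih =>
    obtain ⟨m, v, hv, h0, rfl, hd⟩ := ih
    refine ⟨m + 1, _, hv.snoc (.inr hyx) fun hm => ⟨fun h => ?_, fun _ => hxS⟩, ?_, by simp, ?_⟩
    · exact absurd (hd.2 ⟨hm, h.1⟩) Bool.false_ne_true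
    · rwa [Function.update_of_ne (by omega)]
    · simp [notMem_pa_of_mem_pa hpa hyx]
  | @bounce x y _ hxS hyx ih =>
    obtain ⟨m, v, hv, h0, rfl, hd⟩ := ih
    obtain ⟨hm, hin⟩ := hd.1 rfl
    refine ⟨m + 1, _, hv.snoc (.inr hyx) fun _ => ⟨fun _ => hxS, fun h => absurd ⟨hin, hyx⟩ h⟩,
      ?_, by simp, ?_⟩
    · rwa [Function.update_of_ne (by omega)]
    · simp [notMem_pa_of_mem_pa hpa hyx]

lemma ActiveReach.notMem_of_dSep (hpa : ∀ i j, j ∈ pa i → j < i) {B : Set (Fin n)}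
    (hsep : DSep pa A B S) (hAB : Disjoint A B) {b : Fin n} {d : Bool}
    (h : ActiveReach pa S A b d) : b ∉ B := by
  intro hb
  obtain ⟨m, v, hv, h0, rfl, -⟩ := h.exists_isActiveWalk hpa
  obtain ⟨m', v', htrail, hnb, h0', hm'⟩ := hv.exists_trail (hAB.ne_of_mem h0 hb)
  exact hnb (hsep m' v' htrail (h0' ▸ h0) (hm' ▸ hb))

lemma ActiveReach.descendant {x y : Fin n} (hx : ActiveReach pa S A x true)
    (hxy : ReflTransGen (· ∈ pa ·) x y) (hS : ∀ z, ReflTransGen (· ∈ pa ·) x z → z ∉ S) :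
    ActiveReach pa S A y true := by
  induction hxy with
  | refl => exact hx
  | tail hxz hzy ih => exact .toChild ih (hS _ hxz) hzy

lemma ActiveReach.ancestor {x y : Fin n} (hy : ActiveReach pa S A y false)
    (hxy : ReflTransGen (· ∈ pa ·) x y) (hS : ∀ z, ReflTransGen (· ∈ pa ·) x z → z ∉ S) :
    ActiveReach pa S A x false := by
  induction hxy using Relation.ReflTransGen.head_induction_on with
  | refl => exact hy
  | head hac _ ih =>
    exact .toParent (ih fun z hz => hS z (.head hac hz)) (hS _ (.single hac)) hac

end ActiveReach

section MoralReach

variable {A B : Set (Fin n)}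

/-- Adjacency in the moral graph of `T` with `S` deleted, seen from `x`. Marrying parents is only
needed for common children in `S`: through any other common child in `T` they are already joined
by a path of two edges. -/
def MoralAdj (pa : Fin n → Finset (Fin n)) (S T : Set (Fin n)) (x y : Fin n) : Prop :=
  y ∈ T ∧ y ∉ S ∧ (x ∈ pa y ∨ y ∈ pa x ∨ ∃ c ∈ S, x ∈ pa c ∧ y ∈ pa c)

def moralReach (pa : Fin n → Finset (Fin n)) (A B S : Set (Fin n)) : Set (Fin n) :=
  {y | ∃ a ∈ A, ReflTransGen (MoralAdj pa S (ancestors pa (A ∪ B ∪ S))) a y}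

lemma subset_moralReach : A ⊆ moralReach pa A B S :=
  fun a ha => ⟨a, ha, .refl⟩

lemma mem_moralReach_of_moralAdj {x y : Fin n} (hx : x ∈ moralReach pa A B S)
    (hxy : MoralAdj pa S (ancestors pa (A ∪ B ∪ S)) x y) : y ∈ moralReach pa A B S :=
  let ⟨a, ha, hax⟩ := hx
  ⟨a, ha, hax.tail hxy⟩

lemma moralReach_subset_ancestors : moralReach pa A B S ⊆ ancestors pa (A ∪ B ∪ S) := by
  rintro y ⟨a, ha, hay⟩
  cases hay with
  | refl => exact subset_ancestors (.inl (.inl ha))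
  | tail _ hxy => exact hxy.1

lemma disjoint_moralReach_sep (hAS : Disjoint A S) : Disjoint (moralReach pa A B S) S := by
  refine Set.disjoint_left.2 ?_
  rintro y ⟨a, ha, hay⟩
  cases hay with
  | refl => exact hAS.notMem_of_mem_left ha
  | tail _ hxy => exact hxy.2.1

lemma activeReach_of_mem_moralReach (hpa : ∀ i j, j ∈ pa i → j < i) (hsep : DSep pa A B S)
    (hAB : Disjoint A B) (hAS : Disjoint A S) {y : Fin n} (hy : y ∈ moralReach pa A B S) :
    ActiveReach pa S A y false ∨ ActiveReach pa S A y true ∧ y ∈ ancestors pa S := by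
  obtain ⟨a, ha, hay⟩ := hy
  induction hay with
  | refl => exact .inl (.start ha)
  | @tail x y hax hxy ih =>
    obtain ⟨hyT, -, hstep⟩ := hxy
    have hxS : x ∉ S := (disjoint_moralReach_sep hAS).notMem_of_mem_left ⟨a, ha, hax⟩
    obtain ⟨d, hx⟩ : ∃ d, ActiveReach pa S A x d := ih.elim (⟨_, ·⟩) (⟨_, ·.1⟩)
    rcases hstep with hxy | hyx | ⟨c, hcS, hxc, hyc⟩
    · have hy : ActiveReach pa S A y true := .toChild hx hxS hxy
      by_cases hyS : y ∈ ancestors pa S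
      · exact .inr ⟨hy, hyS⟩
      -- `y` has a descendant `t ∈ A ∪ B` with no vertex of `S` in between; `t ∈ B` contradicts
      -- d-separation, and from `t ∈ A` a walk climbs back up to `y`.
      have hdesc : ∀ z, ReflTransGen (· ∈ pa ·) y z → z ∉ S :=
        fun z hyz hzS => hyS ⟨z, hzS, hyz⟩
      obtain ⟨t, (htA | htB) | htS, hyt⟩ := hyT
      · exact .inl ((ActiveReach.start htA).ancestor hyt hdesc)
      · exact ((hy.descendant hyt hdesc).notMem_of_dSep hpa hsep hAB htB).elim
      · exact (hdesc t hyt htS).elim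
    · exact .inl (ih.elim (.toParent · hxS hyx) fun h => .bounce h.1 h.2 hyx)
    · exact .inl (.bounce (.toChild hx hxS hxc) (subset_ancestors hcS) hyc)

lemma disjoint_moralReach_of_dSep (hpa : ∀ i j, j ∈ pa i → j < i) (hsep : DSep pa A B S)
    (hAB : Disjoint A B) (hAS : Disjoint A S) : Disjoint (moralReach pa A B S) B :=
  Set.disjoint_left.2 fun _ hy hyB =>
    (activeReach_of_mem_moralReach hpa hsep hAB hAS hy).elim
      (·.notMem_of_dSep hpa hsep hAB hyB) (·.1.notMem_of_dSep hpa hsep hAB hyB)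

lemma pa_subset_or_pa_subset_of_mem_ancestors {i : Fin n}
    (hi : i ∈ ancestors pa (A ∪ B ∪ S)) :
    (i ∈ moralReach pa A B S ∪ S ∧ ↑(pa i) ⊆ moralReach pa A B S ∪ S) ∨
      (i ∈ ancestors pa (A ∪ B ∪ S) \ moralReach pa A B S ∧
        ↑(pa i) ⊆ ancestors pa (A ∪ B ∪ S) \ moralReach pa A B S) := by
  set T := ancestors pa (A ∪ B ∪ S)
  set X := moralReach pa A B S
  have hpaT : ∀ j ∈ pa i, j ∈ T := fun j hj => mem_ancestors_of_reflTransGen (.single hj) hi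
  by_cases hiX : i ∈ X
  · refine .inl ⟨.inl hiX, fun j hj => or_iff_not_imp_right.2 fun hjS => ?_⟩
    exact mem_moralReach_of_moralAdj hiX ⟨hpaT j hj, hjS, .inr (.inl hj)⟩
  by_cases hiSX : i ∈ S ∧ ↑(pa i) ⊆ X ∪ S
  · exact .inl ⟨.inr hiSX.1, hiSX.2⟩
  refine .inr ⟨⟨hi, hiX⟩, fun j hj => ⟨hpaT j hj, fun hjX => ?_⟩⟩
  by_cases hiS : i ∈ S
  · obtain ⟨k, hk, hkXS⟩ := Set.not_subset.1 fun h => hiSX ⟨hiS, h⟩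
    rw [Set.mem_union, not_or] at hkXS
    exact hkXS.1 (mem_moralReach_of_moralAdj hjX
      ⟨hpaT k hk, hkXS.2, .inr (.inr ⟨i, hiS, hj, hk⟩)⟩)
  · exact hiX (mem_moralReach_of_moralAdj hjX ⟨hi, hiS, .inl hj⟩)

end MoralReach

section Gluing

variable {D : Fin n → Type*} {C : Fin n → Set (∀ j, D j)}

lemma update_mem_of_forall_mem_pa_eq (hpa : ∀ i j, j ∈ pa i → j < i)
    (hloc : ∀ i (x x' : ∀ j, D j),
      (∀ j, (j = i ∨ j ∈ pa i) → x j = x' j) → (x ∈ C i ↔ x' ∈ C i))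
    {i : Fin n} {x y : ∀ j, D j} (hy : y ∈ C i) (hxy : ∀ j ∈ pa i, x j = y j) :
    Function.update x i (y i) ∈ C i := by
  refine (hloc i _ y fun j hj => ?_).2 hy
  rcases hj with rfl | hj
  · exact Function.update_self ..
  · rw [Function.update_of_ne (hpa i j hj).ne]
    exact hxy j hj

lemma exists_mem_iInter_of_forall_exists_update (hpa : ∀ i j, j ∈ pa i → j < i)
    (hloc : ∀ i (x x' : ∀ j, D j),
      (∀ j, (j = i ∨ j ∈ pa i) → x j = x' j) → (x ∈ C i ↔ x' ∈ C i))
    [Nonempty (∀ j, D j)] (P : ∀ i, D i → Prop)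
    (hext : ∀ i (x : ∀ j, D j), (∀ j < i, P j (x j)) → ∃ v, P i v ∧ Function.update x i v ∈ C i) :
    ∃ z ∈ ⋂ i, C i, ∀ i, P i (z i) := by
  have hstage : ∀ m ≤ n, ∃ z : ∀ j, D j, ∀ i : Fin n, (i : ℕ) < m → z ∈ C i ∧ P i (z i) := by
    intro m
    induction m with
    | zero => exact fun _ => ⟨Classical.arbitrary _, fun i hi => absurd hi (Nat.not_lt_zero _)⟩
    | succ m ih =>
      intro hm
      obtain ⟨z, hz⟩ := ih (by omega)
      obtain ⟨v, hv, hvC⟩ := hext ⟨m, hm⟩ z fun j hj => (hz j hj).2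
      refine ⟨Function.update z ⟨m, hm⟩ v, fun k hk => ?_⟩
      rcases Nat.lt_succ_iff_lt_or_eq.1 hk with hk | hk
      · have hne : ∀ j, (j = k ∨ j ∈ pa k) → j ≠ ⟨m, hm⟩ := by
          rintro j hj rfl
          rcases hj with rfl | hj
          · exact lt_irrefl _ hk
          · exact lt_asymm hk (hpa k _ hj)
        rw [Function.update_of_ne (hne k (.inl rfl))]
        exact ⟨(hloc k _ z fun j hj => Function.update_of_ne (hne j hj) _ _).2 (hz k hk).1,
          (hz k hk).2⟩
      · obtain rfl : k = ⟨m, hm⟩ := Fin.ext hk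
        rw [Function.update_self]
        exact ⟨hvC, hv⟩
  obtain ⟨z, hz⟩ := hstage n le_rfl
  exact ⟨z, Set.mem_iInter.2 fun i => (hz i i.2).1, fun i => (hz i i.2).2⟩

theorem exists_mem_iInter_eq_of_pa_subset (hpa : ∀ i j, j ∈ pa i → j < i)
    (hloc : ∀ i (x x' : ∀ j, D j),
      (∀ j, (j = i ∨ j ∈ pa i) → x j = x' j) → (x ∈ C i ↔ x' ∈ C i))
    (hdef : ∀ i (x : ∀ k, D k), ∃ v : D i, Function.update x i v ∈ C i)
    {u w : ∀ j, D j} (hu : u ∈ ⋂ i, C i) (hw : w ∈ ⋂ i, C i) {L R : Set (Fin n)}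
    (huw : ∀ i ∈ L ∩ R, u i = w i)
    (hLR : ∀ i ∈ L ∪ R, (i ∈ L ∧ ↑(pa i) ⊆ L) ∨ (i ∈ R ∧ ↑(pa i) ⊆ R)) :
    ∃ z ∈ ⋂ i, C i, (∀ i ∈ L, z i = u i) ∧ ∀ i ∈ R, z i = w i := by
  have : Nonempty (∀ j, D j) := ⟨u⟩
  refine (exists_mem_iInter_of_forall_exists_update hpa hloc
    (fun i v => (i ∈ L → v = u i) ∧ (i ∈ R → v = w i)) fun i x hx => ?_).imp
    fun z ⟨hz, hP⟩ => ⟨hz, fun i hi => (hP i).1 hi, fun i hi => (hP i).2 hi⟩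
  have hxpa (j : Fin n) (hj : j ∈ pa i) := hx j (hpa i j hj)
  by_cases hi : i ∈ L ∪ R
  · rcases hLR i hi with ⟨hiL, hpaL⟩ | ⟨hiR, hpaR⟩
    · exact ⟨u i, ⟨fun _ => rfl, fun hiR => huw i ⟨hiL, hiR⟩⟩,
        update_mem_of_forall_mem_pa_eq hpa hloc (Set.mem_iInter.1 hu i)
          fun j hj => (hxpa j hj).1 (hpaL hj)⟩
    · exact ⟨w i, ⟨fun hiL => (huw i ⟨hiL, hiR⟩).symm, fun _ => rfl⟩,
        update_mem_of_forall_mem_pa_eq hpa hloc (Set.mem_iInter.1 hw i)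
          fun j hj => (hxpa j hj).2 (hpaR hj)⟩
  · obtain ⟨v, hv⟩ := hdef i x
    exact ⟨v, ⟨fun h => (hi (.inl h)).elim, fun h => (hi (.inr h)).elim⟩, hv⟩

end Gluing

end

theorem global_markov_property_general {n : ℕ}
    (pa : Fin n → Finset (Fin n)) (hpa : ∀ i j, j ∈ pa i → j < i)
    (D : Fin n → Type*)
    (C : Fin n → Set (∀ j, D j))
    (hloc : ∀ i (x x' : ∀ j, D j),
      (∀ j, (j = i ∨ j ∈ pa i) → x j = x' j) → (x ∈ C i ↔ x' ∈ C i))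
    (hdef : ∀ i (x : ∀ k, D k), ∃ v : D i, Function.update x i v ∈ C i)
    (A B S : Set (Fin n))
    (hAB : Disjoint A B) (hAS : Disjoint A S)
    (hsep : DSep pa A B S) :
    CondIndep (⋂ i, C i) A B S := by
  intro u hu w hw huw
  set T := ancestors pa (A ∪ B ∪ S)
  set X := moralReach pa A B S
  have hT : X ∪ S ∪ T \ X ⊆ T := Set.union_subset
    (Set.union_subset moralReach_subset_ancestors fun _ h => subset_ancestors (.inr h))
    Set.sdiff_subset
  obtain ⟨z, hz, hzu, hzw⟩ := exists_mem_iInter_eq_of_pa_subset hpa hloc hdef hu hw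
    (fun i hi => huw i (hi.1.resolve_left hi.2.2))
    fun i hi => pa_subset_or_pa_subset_of_mem_ancestors (hT hi)
  have hBX : Disjoint X B := disjoint_moralReach_of_dSep hpa hsep hAB hAS
  exact ⟨z, hz, fun k hk => hzu k (hk.imp_left fun h => subset_moralReach h),
    fun k hk => hzw k ⟨subset_ancestors (.inl (.inr hk)), hBX.notMem_of_mem_right hk⟩⟩

/-- Global Markov property for Bayesian uncertainty networks: for a Bayesian
uncertainty network with joint uncertainty set `⋂ i, C i` and all constraints
always definite, if `A`, `B`, `S` are pairwise disjoint (not necessarily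
spanning) and `S` d-separates `A` and `B`, then `A` and `B` are conditionally
independent given `S`. -/
theorem global_markov_property {n : ℕ}
    (pa : Fin n → Finset (Fin n)) (hpa : ∀ i j, j ∈ pa i → j < i)
    (D : Fin n → Type*) (hD : ∀ i, Nonempty (D i))
    (C : Fin n → Set (∀ j, D j))
    (hloc : ∀ i (x x' : ∀ j, D j),
      (∀ j, (j = i ∨ j ∈ pa i) → x j = x' j) → (x ∈ C i ↔ x' ∈ C i))
    (hdef : ∀ i (x : ∀ k, D k), ∃ v : D i, Function.update x i v ∈ C i)
    (A B S : Set (Fin n))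
    (hAB : Disjoint A B) (hAS : Disjoint A S) (hBS : Disjoint B S)
    (hsep : DSep pa A B S) :
    CondIndep (⋂ i, C i) A B S :=
  global_markov_property_general pa hpa D C hloc hdef A B S hAB hAS hsep
end

section
/- (Parents d-separate a node from its non-descendants.) Let pa be a parent assignment on V = Fin n. Then for every i ∈ V, the set pa i d-separates the singleton {i} from the set B_i = V \ ({i} ∪ desc(i) ∪ pa i) of non-descendants of i excluding i and pa i, where desc(i) is the set of descendants of i under the transitive closure of the child relation. -/
private lemma desc_lt {n : ℕ} {pa : Fin n → Finset (Fin n)}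
    (hpa : ∀ i j, j ∈ pa i → j < i) {i k : Fin n} (h : Desc pa i k) : i < k := by
  induction h with
  | single h => exact hpa _ _ h
  | tail _ h ih => exact ih.trans (hpa _ _ h)

/-- Parents d-separate a node from its non-descendants: for every vertex `i`,
the parent set `pa i` d-separates `{i}` from the set of non-descendants of `i`
excluding `i` and its parents. -/
theorem parents_dsep_nondescendants {n : ℕ} (pa : Fin n → Finset (Fin n))
    (hpa : ∀ i j, j ∈ pa i → j < i) (i : Fin n) :
    DSep pa {i} {k | k ≠ i ∧ ¬ Desc pa i k ∧ k ∉ pa i} (↑(pa i)) := by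
  intro m v htrail hv0 hvm
  obtain ⟨hm, hinj, hedge⟩ := htrail
  simp only [Set.mem_singleton_iff] at hv0
  obtain ⟨hne, hnd, hnp⟩ := hvm
  rcases hedge 0 hm with hfwd | hbwd
  · -- first edge goes i → v 1 : follow directed path
    have hQ : ∃ k, k = m ∨ v k ∉ pa (v (k + 1)) := ⟨m, Or.inl rfl⟩
    classical
    set k := Nat.find hQ with hkdef
    have hk := Nat.find_spec hQ
    rw [← hkdef] at hk
    have hmin : ∀ j < k, j ≠ m ∧ v j ∈ pa (v (j + 1)) := by
      intro j hj
      have := Nat.find_min hQ hj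
      push_neg at this
      exact this
    have hk1 : 0 < k := by
      rcases Nat.eq_zero_or_pos k with h0 | h0
      · rw [h0] at hk
        rcases hk with h | h
        · omega
        · exact absurd hfwd h
      · exact h0
    have hdesc : ∀ j ≤ k, 1 ≤ j → Desc pa i (v j) := by
      intro j
      induction j with
      | zero => intro _ h; omega
      | succ j ih =>
        intro hjk _
        have hj : v j ∈ pa (v (j + 1)) := (hmin j (by omega)).2
        rcases Nat.eq_zero_or_pos j with h0 | h0
        · subst h0
          exact Relation.TransGen.single (hv0 ▸ hj)
        · exact (ih (by omega) h0).tail hj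
    have hdk : Desc pa i (v k) := hdesc k le_rfl hk1
    have hkm : k ≠ m := fun h => hnd (h ▸ hdk)
    have hkle : k ≤ m := Nat.find_le (Or.inl rfl)
    have hklt : k < m := lt_of_le_of_ne hkle hkm
    have hrev : v (k + 1) ∈ pa (v k) := by
      rcases hk with h | h
      · omega
      · rcases hedge k hklt with h' | h'
        · exact absurd h' h
        · exact h'
    have hprev : v (k - 1) ∈ pa (v k) := by
      have h := (hmin (k - 1) (by omega)).2
      have : k - 1 + 1 = k := by omega
      rwa [this] at h
    refine ⟨k, hk1, hklt, Or.inr ⟨⟨hprev, hrev⟩, ?_, ?_⟩⟩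
    · intro h
      simp only [Finset.mem_coe] at h
      exact absurd (desc_lt hpa hdk) (not_lt.mpr (le_of_lt (hpa _ _ h)))
    · intro d hd h
      simp only [Finset.mem_coe] at h
      exact absurd (desc_lt hpa (hdk.trans hd)) (not_lt.mpr (le_of_lt (hpa _ _ h)))
  · -- first edge is v 1 → i : v 1 is a parent of i, non-collider in S
    rw [hv0] at hbwd
    have h1m : 1 < m := by
      rcases lt_or_eq_of_le hm with h | h
      · exact h
      · exact absurd (h ▸ hbwd) hnp
    refine ⟨1, one_pos, h1m, Or.inl ⟨?_, by simpa using hbwd⟩⟩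
    rintro ⟨h01, -⟩
    rw [hv0] at h01
    have := hpa _ _ hbwd
    have := hpa _ _ h01
    exact absurd (this.trans ‹v 1 < i›) (lt_irrefl i)
end

section
/- (The point estimate of the canonical Bayesian uncertainty network equals the MAP estimate.) Let V be a finite index type, S a type, η > 0 a real number, and f_i : S → ℝ a family of functions with f_i(x) > 0 for all i ∈ V and x ∈ S. For each x ∈ S, the infimum over β : V → ℝ of ∑_{i ∈ V} β_i subject to the constraints −log(f_i(x)) ≤ η · β_i for all i, equals −(1/η) · log(∏_{i ∈ V} f_i(x)). Consequently, a point x̂ ∈ S minimizes this infimum over S if and only if x̂ maximizes the product ∏_{i ∈ V} f_i(x) over S. -/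
/-! The constraints decouple, so the infimum is attained at `β i = -log (f i x) / η`, and
`∑ i, -log (f i x) / η = -(1/η) log ∏ i, f i x`. As `t ↦ -(1/η) log t` is strictly decreasing
on `(0, ∞)`, minimizing the infimum is the same as maximizing the product. -/

open Finset

lemma isLeast_sum_of_forall_le_mul {V : Type*} [Fintype V] {η : ℝ} (hη : 0 < η) (g : V → ℝ) :
    IsLeast {s : ℝ | ∃ β : V → ℝ, (∀ i, g i ≤ η * β i) ∧ s = ∑ i, β i} (∑ i, g i / η) := by
  refine ⟨⟨fun i => g i / η, fun i => (mul_div_cancel₀ _ hη.ne').ge, rfl⟩, ?_⟩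
  rintro s ⟨β, hβ, rfl⟩
  exact sum_le_sum fun i _ => (div_le_iff₀' hη).2 (hβ i)

lemma sum_neg_log_div_eq {ι : Type*} (s : Finset ι) (η : ℝ) {p : ι → ℝ}
    (hp : ∀ i ∈ s, p i ≠ 0) :
    ∑ i ∈ s, -Real.log (p i) / η = -(1 / η) * Real.log (∏ i ∈ s, p i) := by
  rw [Real.log_prod hp, mul_sum]
  refine sum_congr rfl fun i _ => ?_
  ring

lemma neg_one_div_mul_log_le_iff {η a b : ℝ} (hη : 0 < η) (ha : 0 < a) (hb : 0 < b) :
    -(1 / η) * Real.log a ≤ -(1 / η) * Real.log b ↔ b ≤ a := by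
  rw [neg_mul, neg_mul, neg_le_neg_iff, mul_le_mul_iff_of_pos_left (one_div_pos.2 hη),
    Real.log_le_log_iff hb ha]

/-- The point estimate of the canonical Bayesian uncertainty network equals the
MAP estimate: for strictly positive factors `f i`, the infimum over `β` of
`∑ i, β i` subject to `-log (f i x) ≤ η * β i` equals
`-(1/η) * log (∏ i, f i x)`; consequently `xhat` minimizes this infimum over `S`
iff `xhat` maximizes `∏ i, f i x` over `S`. -/
theorem point_estimate_eq_MAP {V S : Type*} [Fintype V] (η : ℝ) (hη : 0 < η)
    (f : V → S → ℝ) (hf : ∀ i x, 0 < f i x) :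
    (∀ x : S,
      sInf {s : ℝ | ∃ β : V → ℝ,
          (∀ i, -Real.log (f i x) ≤ η * β i) ∧ s = ∑ i, β i} =
        -(1 / η) * Real.log (∏ i, f i x)) ∧
    ∀ xhat : S,
      (∀ x : S,
        sInf {s : ℝ | ∃ β : V → ℝ,
            (∀ i, -Real.log (f i xhat) ≤ η * β i) ∧ s = ∑ i, β i} ≤
          sInf {s : ℝ | ∃ β : V → ℝ,
              (∀ i, -Real.log (f i x) ≤ η * β i) ∧ s = ∑ i, β i}) ↔
        ∀ x : S, ∏ i, f i x ≤ ∏ i, f i xhat := by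
  have point_estimate : ∀ x : S,
      sInf {s : ℝ | ∃ β : V → ℝ,
          (∀ i, -Real.log (f i x) ≤ η * β i) ∧ s = ∑ i, β i} =
        -(1 / η) * Real.log (∏ i, f i x) := fun x => by
    rw [(isLeast_sum_of_forall_le_mul hη _).csInf_eq,
      sum_neg_log_div_eq _ _ fun i _ => (hf i x).ne']
  have prod_pos : ∀ x, 0 < ∏ i, f i x := fun x => prod_pos fun i _ => hf i x
  refine ⟨point_estimate, fun xhat => ?_⟩
  simp only [point_estimate, neg_one_div_mul_log_le_iff hη (prod_pos _) (prod_pos _)]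
end
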